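/- arXiv:math/9908098 — 2 statements merged into one kernel-verified Lean document; each statement's English description precedes it below -/
import Mathlib

section
/- Let G be a perfect group (i.e. G equals its own commutator subgroup), let n ≥ 2, and let H be a subgroup of the direct power G^n (functions Fin n → G with pointwise multiplication) with the property that for every g ∈ G and every pair of distinct indices i ≠ j there exists h ∈ H with h(i) = g and h(j) = 1. Then H = G^n. -/
/-!
Fix an index `i` and let `V S ≤ G` be the set of values at `i` of the elements of `H` that are
trivial on `S`. The commutator of an element trivial on `S` with one trivial on `T` is trivial on
`S ∪ T`, so `⁅V S, V T⁆ ≤ V (S ∪ T)`. The hypothesis says `V {j} = G` for `j ≠ i`, and `G` is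
perfect, so by induction `V {i}ᶜ = G`: `H` contains every `Pi.mulSingle i g`, and these generate
`Gⁿ`.
-/

namespace Subgroup

variable {ι : Type*} {G : ι → Type*} [∀ i, Group (G i)]

def valuesAt (H : Subgroup (∀ k, G k)) (i : ι) (S : Set ι) : Subgroup (G i) :=
  (H ⊓ ⨅ k ∈ S, (Pi.evalMonoidHom G k).ker).map (Pi.evalMonoidHom G i)

variable {H : Subgroup (∀ k, G k)} {i : ι} {S T : Set ι}

theorem mem_valuesAt {g : G i} :
    g ∈ H.valuesAt i S ↔ ∃ h ∈ H, h i = g ∧ ∀ k ∈ S, h k = 1 := by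
  simp only [valuesAt, mem_map, mem_inf, mem_iInf, MonoidHom.mem_ker, Pi.evalMonoidHom_apply]
  exact exists_congr fun h => by tauto

theorem valuesAt_anti (hST : S ⊆ T) : H.valuesAt i T ≤ H.valuesAt i S := fun _ hg => by
  obtain ⟨h, hH, hi, hT⟩ := mem_valuesAt.1 hg
  exact mem_valuesAt.2 ⟨h, hH, hi, fun k hk => hT k (hST hk)⟩

theorem commutator_valuesAt_le : ⁅H.valuesAt i S, H.valuesAt i T⁆ ≤ H.valuesAt i (S ∪ T) := by
  rw [commutator_le]
  intro a ha b hb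
  obtain ⟨x, hx, rfl, hxS⟩ := mem_valuesAt.1 ha
  obtain ⟨y, hy, rfl, hyT⟩ := mem_valuesAt.1 hb
  have hxy : x * y * x⁻¹ * y⁻¹ ∈ H := mul_mem (mul_mem (mul_mem hx hy) (inv_mem hx)) (inv_mem hy)
  refine mem_valuesAt.2 ⟨_, hxy, rfl, ?_⟩
  rintro k (hk | hk) <;> simp [hxS, hyT, hk]

theorem valuesAt_union_eq_top (hG : _root_.commutator (G i) = ⊤) (hS : H.valuesAt i S = ⊤)
    (hT : H.valuesAt i T = ⊤) : H.valuesAt i (S ∪ T) = ⊤ :=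
  top_le_iff.1 <| le_trans (by rw [hS, hT]; exact hG.ge) commutator_valuesAt_le

theorem valuesAt_eq_top_of_finite (hG : _root_.commutator (G i) = ⊤) {j₀ : ι} (hj₀ : j₀ ≠ i)
    (hpair : ∀ j, j ≠ i → H.valuesAt i {j} = ⊤) (hS : S.Finite) (hiS : i ∉ S) :
    H.valuesAt i S = ⊤ := by
  induction S, hS using Set.Finite.induction_on with
  | empty => exact top_le_iff.1 <| hpair j₀ hj₀ ▸ valuesAt_anti (Set.empty_subset _)
  | @insert k S _ _ ih =>
    rw [Set.mem_insert_iff, not_or] at hiS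
    rw [Set.insert_eq]
    exact valuesAt_union_eq_top hG (hpair k (Ne.symm hiS.1)) (ih hiS.2)

theorem mulSingle_mem_of_valuesAt_compl_eq_top [DecidableEq ι] (h : H.valuesAt i {i}ᶜ = ⊤)
    (g : G i) : Pi.mulSingle i g ∈ H := by
  obtain ⟨x, hx, hxi, hx1⟩ := mem_valuesAt.1 (h ▸ mem_top g)
  convert hx
  ext k
  rcases eq_or_ne k i with rfl | hk
  · simp [hxi]
  · simp [hk, hx1 k hk]

end Subgroup

/-- If `G` is perfect, `n ≥ 2`, and `H ≤ Gⁿ` contains, for every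
`g : G` and distinct indices `i ≠ j`, an element equal to `g` at `i` and to `1`
at `j`, then `H = Gⁿ`. -/
theorem stmt_8 {G : Type*} [Group G] (hperf : commutator G = ⊤)
    {n : ℕ} (hn : 2 ≤ n) (H : Subgroup (Fin n → G))
    (hH : ∀ g : G, ∀ i j : Fin n, i ≠ j → ∃ h ∈ H, h i = g ∧ h j = 1) :
    H = ⊤ := by
  have : Nontrivial (Fin n) := Fin.nontrivial_iff_two_le.mpr hn
  have hpair (i j : Fin n) (hji : j ≠ i) : H.valuesAt i {j} = ⊤ := eq_top_iff.2 fun g _ => by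
    obtain ⟨h, hhH, hi, hj⟩ := hH g i j hji.symm
    exact Subgroup.mem_valuesAt.2 ⟨h, hhH, hi, by simpa using hj⟩
  refine eq_top_iff.2 fun f _ => Subgroup.pi_mem_of_mulSingle_mem f fun i => ?_
  obtain ⟨j, hji⟩ := exists_ne i
  exact Subgroup.mulSingle_mem_of_valuesAt_compl_eq_top
    (Subgroup.valuesAt_eq_top_of_finite hperf hji (hpair i) (Set.toFinite _) (by simp)) _
end

section
/- Let α, β : ℝ → ℝ^d be real-analytic curves whose derivatives are nonvanishing at every point of [0,1]. If the intersection α([0,1]) ∩ β([0,1]) of their images is an infinite set, then there exist nondegenerate closed intervals I, J ⊆ [0,1] such that α(I) = β(J); i.e., two regular analytic curves either intersect in finitely many points or share a common nondegenerate subarc. -/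
/-!
The set `P` of parameter pairs `(u, v) ∈ [0,1]²` with `α u = β v` is compact and infinite, so it
has an accumulation point `(s, t)`. Since `α' s ≠ 0`, `α` has an analytic left inverse `g` near
`s`, and `ψ := g ∘ β` is analytic at `t` with `β v = α (ψ v)` for infinitely many `v → t`.
By the identity theorem `β = α ∘ ψ` near `t`, so `ψ' t ≠ 0` because `β' t ≠ 0`. Hence `ψ` maps a
small interval `[t, t']` homeomorphically onto `[s, ψ t']`, and `β [t, t'] = α [s, ψ t']`.
-/

open Filter Set Topology
open scoped Interval

theorem Filter.Eventually.forall_uIcc {p : ℝ → Prop} {a : ℝ} (h : ∀ᶠ x in 𝓝 a, p x) :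
    ∀ᶠ b in 𝓝 a, ∀ x ∈ [[a, b]], p x := by
  obtain ⟨ε, hε, hball⟩ := Metric.eventually_nhds_iff_ball.1 h
  filter_upwards [Metric.ball_mem_nhds a hε] with b hb x hx
  exact hball x ((convex_ball a ε).ordConnected.uIcc_subset (Metric.mem_ball_self hε) hb hx)

theorem ContinuousOn.image_uIcc_of_injOn {α δ : Type*} [ConditionallyCompleteLinearOrder α]
    [TopologicalSpace α] [OrderTopology α] [DenselyOrdered α] [LinearOrder δ]
    [TopologicalSpace δ] [OrderClosedTopology δ] {f : α → δ} {a b : α}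
    (hf : ContinuousOn f [[a, b]]) (hinj : InjOn f [[a, b]]) : f '' [[a, b]] = [[f a, f b]] :=
  (hf.strictMonoOn_of_injOn_Icc' inf_le_sup hinj).elim
    (fun h => hf.image_uIcc_of_monotoneOn h.monotoneOn)
    (fun h => hf.image_uIcc_of_antitoneOn h.antitoneOn)

theorem HasStrictDerivAt.eventually_injOn_image_uIcc {f : ℝ → ℝ} {f' a : ℝ}
    (hf : HasStrictDerivAt f f' a) (hf' : f' ≠ 0) :
    ∀ᶠ b in 𝓝 a, InjOn f [[a, b]] ∧ f '' [[a, b]] = [[f a, f b]] := by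
  obtain ⟨_, U, hU, hfU⟩ := hf.hasStrictFDerivAt.exists_lipschitzOnWith
  filter_upwards [((hf.eventually_left_inverse hf').and hU).forall_uIcc] with b hb
  have hinj : InjOn f [[a, b]] := fun x hx y hy hxy => by
    rw [← (hb x hx).1, hxy, (hb y hy).1]
  exact ⟨hinj, (hfU.continuousOn.mono fun x hx => (hb x hx).2).image_uIcc_of_injOn hinj⟩

/-- The left inverse is `r ∘ ℓ`, with `ℓ` a continuous functional not vanishing on `γ' s` and `r`
the local inverse of the scalar function `ℓ ∘ γ`. -/
theorem AnalyticAt.exists_leftInverse_of_deriv_ne_zero {𝕜 E : Type*} [RCLike 𝕜]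
    [NormedAddCommGroup E] [NormedSpace 𝕜 E] {γ : 𝕜 → E} {s : 𝕜} (hγ : AnalyticAt 𝕜 γ s)
    (hγ' : deriv γ s ≠ 0) : ∃ g : E → 𝕜, AnalyticAt 𝕜 g (γ s) ∧ ∀ᶠ u in 𝓝 s, g (γ u) = u := by
  obtain ⟨ℓ, -, hℓ⟩ := exists_dual_vector 𝕜 (deriv γ s) (norm_ne_zero_iff.2 hγ')
  have hf : AnalyticAt 𝕜 (ℓ ∘ γ) s := (ℓ.analyticAt _).comp hγ
  have hf' : deriv (ℓ ∘ γ) s ≠ 0 := by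
    rw [(ℓ.hasFDerivAt.comp_hasDerivAt s hγ.differentiableAt.hasDerivAt).deriv, hℓ]
    exact_mod_cast norm_ne_zero_iff.2 hγ'
  exact ⟨_ ∘ ℓ, (hf.analyticAt_localInverse hf').comp (f := ℓ) (x := γ s) (ℓ.analyticAt _),
    hf.hasStrictDerivAt.eventually_left_inverse hf'⟩

/-- Near `(s, t)` a point `(u, v)` of `P` is recovered from `v` as `u = g (β v)`, so the points
of `P` accumulating at `(s, t)` have `v ≠ t`. -/
theorem AccPt.frequently_mem_of_leftInverse {X Y Z : Type*} [TopologicalSpace X]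
    [TopologicalSpace Z] {α : X → Y} {β : Z → Y} {g : Y → X} {P : Set (X × Z)} {s : X} {t : Z}
    (hacc : AccPt (s, t) (𝓟 P)) (hP : P ⊆ {p | α p.1 = β p.2}) (hst : α s = β t)
    (hg : ∀ᶠ u in 𝓝 s, g (α u) = u) : ∃ᶠ v in 𝓝[≠] t, (g (β v), v) ∈ P := by
  have hgs : g (β t) = s := hst ▸ hg.self_of_nhds
  have hfreq : ∃ᶠ p in 𝓝 (s, t), p.2 ≠ t ∧ (g (β p.2), p.2) ∈ P := by
    refine ((accPt_iff_frequently.1 hacc).and_eventually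
      (continuousAt_fst.eventually hg)).mono ?_
    rintro ⟨u, v⟩ ⟨⟨hne, hp⟩, hgu⟩
    have hu : g (β v) = u := by rw [← hP hp, hgu]
    refine ⟨?_, hu ▸ hp⟩
    rintro rfl
    exact hne (Prod.ext (hu ▸ hgs) rfl)
  rw [frequently_nhdsWithin_iff]
  exact ((continuousAt_snd (p := (s, t))).frequently (p := fun v => v ≠ t ∧ (g (β v), v) ∈ P)
    hfreq).mono fun v hv => ⟨hv.2, hv.1⟩

theorem AccPt.exists_eventuallyEq_comp {𝕜 E : Type*} [RCLike 𝕜] [NormedAddCommGroup E]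
    [NormedSpace 𝕜 E] {α β : 𝕜 → E} {P : Set (𝕜 × 𝕜)} {s t : 𝕜} (hacc : AccPt (s, t) (𝓟 P))
    (hP : P ⊆ {p | α p.1 = β p.2}) (hst : α s = β t) (hα : AnalyticAt 𝕜 α s)
    (hα' : deriv α s ≠ 0) (hβ : AnalyticAt 𝕜 β t) :
    ∃ ψ : 𝕜 → 𝕜, AnalyticAt 𝕜 ψ t ∧ ψ t = s ∧ β =ᶠ[𝓝 t] α ∘ ψ ∧
      ∃ᶠ v in 𝓝[≠] t, (ψ v, v) ∈ P := by
  obtain ⟨g, hg, hgα⟩ := hα.exists_leftInverse_of_deriv_ne_zero hα'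
  have hψt : g (β t) = s := hst ▸ hgα.self_of_nhds
  have hψ : AnalyticAt 𝕜 (g ∘ β) t := hg.comp_of_eq hβ hst.symm
  have hfreq := hacc.frequently_mem_of_leftInverse hP hst hgα
  refine ⟨g ∘ β, hψ, hψt, ?_, hfreq⟩
  exact (hβ.frequently_eq_iff_eventually_eq (hα.comp_of_eq hψ hψt)).1
    (hfreq.mono fun v hv => (hP hv).symm)

/-- Two regular real-analytic curves whose images over `[0,1]`
intersect in infinitely many points share a common nondegenerate subarc. -/
theorem stmt_10 (d : ℕ) (α β : ℝ → EuclideanSpace ℝ (Fin d))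
    (hα : ∀ x : ℝ, AnalyticAt ℝ α x) (hβ : ∀ x : ℝ, AnalyticAt ℝ β x)
    (hα' : ∀ t ∈ Set.Icc (0:ℝ) 1, deriv α t ≠ 0)
    (hβ' : ∀ t ∈ Set.Icc (0:ℝ) 1, deriv β t ≠ 0)
    (hinf : (α '' Set.Icc (0:ℝ) 1 ∩ β '' Set.Icc (0:ℝ) 1).Infinite) :
    ∃ a b c e : ℝ, a < b ∧ c < e ∧
      Set.Icc a b ⊆ Set.Icc (0:ℝ) 1 ∧ Set.Icc c e ⊆ Set.Icc (0:ℝ) 1 ∧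
      α '' Set.Icc a b = β '' Set.Icc c e := by
  set I := Icc (0:ℝ) 1
  set P : Set (ℝ × ℝ) := (I ×ˢ I) ∩ {p | α p.1 = β p.2}
  have hPcpt : IsCompact P := (isCompact_Icc.prod isCompact_Icc).inter_right <|
    isClosed_eq ((AnalyticOnNhd.continuous fun x _ => hα x).comp continuous_fst)
      ((AnalyticOnNhd.continuous fun x _ => hβ x).comp continuous_snd)
  have hPinf : P.Infinite := by
    refine Set.Infinite.of_image (fun p => α p.1) (hinf.mono ?_)
    rintro _ ⟨⟨u, hu, rfl⟩, v, hv, hvu⟩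
    exact ⟨(u, v), ⟨⟨hu, hv⟩, hvu.symm⟩, rfl⟩
  obtain ⟨⟨s, t⟩, ⟨⟨hs, ht⟩, hst⟩, hacc⟩ := hPinf.exists_accPt_of_subset_isCompact hPcpt subset_rfl
  obtain ⟨ψ, hψ, hψt, hβψ, hfreq⟩ :=
    hacc.exists_eventuallyEq_comp inter_subset_right hst (hα s) (hα' s hs) (hβ t)
  have hψ' : deriv ψ t ≠ 0 := fun h0 => hβ' t ht <| by
    rw [hβψ.deriv_eq, deriv.scomp t (hα (ψ t)).differentiableAt hψ.differentiableAt, h0,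
      zero_smul]
  obtain ⟨t', ⟨⟨⟨hψt'I, ht'I⟩, -⟩, ht't⟩, ⟨hinj, himg⟩, heq⟩ :=
    ((hfreq.and_eventually self_mem_nhdsWithin).and_eventually
      ((hψ.hasStrictDerivAt.eventually_injOn_image_uIcc hψ').and
        (Eventually.forall_uIcc hβψ) |>.filter_mono nhdsWithin_le_nhds)).exists
  have hψt' : ψ t' ≠ s := hψt ▸ hinj.ne right_mem_uIcc left_mem_uIcc ht't
  refine ⟨s ⊓ ψ t', s ⊔ ψ t', t ⊓ t', t ⊔ t', inf_lt_sup.2 hψt'.symm, inf_lt_sup.2 (Ne.symm ht't),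
    Icc_subset_Icc (le_inf hs.1 hψt'I.1) (sup_le hs.2 hψt'I.2),
    Icc_subset_Icc (le_inf ht.1 ht'I.1) (sup_le ht.2 ht'I.2), ?_⟩
  change α '' [[s, ψ t']] = β '' [[t, t']]
  rw [← hψt, ← himg, image_image]
  exact (image_congr heq).symm
end
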